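/- The twisted first-order condition holds for the Yukawa part of the Dirac operator: for all elements a, b of the twisted algebra, [[γ⁵⊗D_Y, π(b)]_ρ, a°]_{ρ°} = 0, where a° := J·π(a)†·J⁻¹, ρ°(a°) := J·π(ρ(a))†·J⁻¹, and [T, a°]_{ρ°} := T·a° − ρ°(a°)·T. -/

import Mathlib

open Matrix

noncomputable section

namespace TwistSM

/-! ### Dirac matrices -/

def pauli1 : Matrix (Fin 2) (Fin 2) ℂ := !![0, 1; 1, 0]
def pauli2 : Matrix (Fin 2) (Fin 2) ℂ := !![0, -Complex.I; Complex.I, 0]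
def pauli3 : Matrix (Fin 2) (Fin 2) ℂ := !![1, 0; 0, -1]

/-- σ^μ = (I₂, −iσ₁, −iσ₂, −iσ₃) -/
def sigE : Fin 4 → Matrix (Fin 2) (Fin 2) ℂ :=
  ![1, (-Complex.I) • pauli1, (-Complex.I) • pauli2, (-Complex.I) • pauli3]
/-- σ̃^μ = (I₂, iσ₁, iσ₂, iσ₃) -/
def sigTE : Fin 4 → Matrix (Fin 2) (Fin 2) ℂ :=
  ![1, Complex.I • pauli1, Complex.I • pauli2, Complex.I • pauli3]

/-- Diagonal 2×2 block matrix [[A,0],[0,B]] over a leading `Fin 2` index. -/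
def dgB {m : Type} (A B : Matrix m m ℂ) : Matrix (Fin 2 × m) (Fin 2 × m) ℂ :=
  Matrix.of fun p q =>
    if p.1 = q.1 then (if p.1 = 0 then A p.2 q.2 else B p.2 q.2) else 0

/-- Off-diagonal 2×2 block matrix [[0,A],[B,0]] over a leading `Fin 2` index. -/
def odB {m : Type} (A B : Matrix m m ℂ) : Matrix (Fin 2 × m) (Fin 2 × m) ℂ :=
  Matrix.of fun p q =>
    if p.1 = 0 then (if q.1 = 0 then 0 else A p.2 q.2)
    else (if q.1 = 0 then B p.2 q.2 else 0)

/-- Euclidean Dirac matrices γ^μ_E = [[0, σ^μ],[σ̃^μ, 0]], acting on the spinor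
indices (s, ṡ). -/
def gammaE (μ : Fin 4) : Matrix (Fin 2 × Fin 2) (Fin 2 × Fin 2) ℂ := odB (sigE μ) (sigTE μ)

/-- Entrywise complex conjugation of a matrix. -/
def mconj {m n : Type} (A : Matrix m n ℂ) : Matrix m n ℂ := A.map (starRingEnd ℂ)

/-- C = i γ⁰_E γ²_E (the matrix part of the charge conjugation 𝒥 = C ∘ cc). -/
def Kspin : Matrix (Fin 2 × Fin 2) (Fin 2 × Fin 2) ℂ := Complex.I • (gammaE 0 * gammaE 2)

/-! ### The twisted algebra and its representation on ℂ¹²⁸ -/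

/-- Quaternionic 2×2 matrices: of the form [[α,β],[−conj β, conj α]]. -/
def IsQuat (q : Matrix (Fin 2) (Fin 2) ℂ) : Prop :=
  q 1 0 = -(starRingEnd ℂ) (q 0 1) ∧ q 1 1 = (starRingEnd ℂ) (q 0 0)

/-- An element (c, c', q, q', m, m') of the twisted algebra. -/
structure Alg : Type where
  c : ℂ
  c' : ℂ
  q : Matrix (Fin 2) (Fin 2) ℂ
  q' : Matrix (Fin 2) (Fin 2) ℂ
  m : Matrix (Fin 3) (Fin 3) ℂ
  m' : Matrix (Fin 3) (Fin 3) ℂ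
  hq : IsQuat q
  hq' : IsQuat q'

/-- The twist ρ: exchange primed and unprimed entries. -/
def Alg.rho (a : Alg) : Alg := ⟨a.c', a.c, a.q', a.q, a.m', a.m, a.hq', a.hq⟩

/-- Flavour index α, as a pair (flavour pair, index within the pair):
(0,0) = 1̇, (0,1) = 2̇, (1,0) = 1, (1,1) = 2. -/
abbrev Flav : Type := Fin 2 × Fin 2
/-- Internal index (I, α): lepto-colour I ∈ Fin 4 and flavour α. -/
abbrev Intl : Type := Fin 4 × Flav
/-- (ṡ, (I, α)) -/
abbrev HalfNoS : Type := Fin 2 × Intl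
/-- Half of the full space: (s, ṡ, (I, α)). -/
abbrev Half : Type := Fin 2 × HalfNoS
/-- ℂ¹²⁸, indexed by (C, s, ṡ, (I, α)). -/
abbrev Full : Type := Fin 2 × Half

/-- diag(c, conj c) as a 2×2 matrix. -/
def cdiag (c : ℂ) : Matrix (Fin 2) (Fin 2) ℂ := Matrix.diagonal ![c, (starRingEnd ℂ) c]

def pred3 (i : Fin 4) : Fin 3 := ⟨i.val - 1, by have := i.isLt; omega⟩

/-- diag(c, m) as a 4×4 matrix on the lepto-colour index. -/
def sm4 (c : ℂ) (m : Matrix (Fin 3) (Fin 3) ℂ) : Matrix (Fin 4) (Fin 4) ℂ :=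
  Matrix.of fun i j =>
    if i = 0 then (if j = 0 then c else 0)
    else if j = 0 then 0 else m (pred3 i) (pred3 j)

/-- Q_r = diag(c, conj c, q') on the flavour index. -/
def Qr (a : Alg) : Matrix Flav Flav ℂ := dgB (cdiag a.c) a.q'
/-- Q_l = diag(c', conj c', q) on the flavour index. -/
def Ql (a : Alg) : Matrix Flav Flav ℂ := dgB (cdiag a.c') a.q

/-- diag_α(A⊗I₂, B⊗I₂) on (I, α). -/
def msect (A B : Matrix (Fin 4) (Fin 4) ℂ) : Matrix Intl Intl ℂ :=
  Matrix.of fun p q =>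
    if p.2 = q.2 then (if p.2.1 = 0 then A p.1 q.1 else B p.1 q.1) else 0

/-- M_r = diag_α(𝗆⊗I₂, 𝗆'⊗I₂). -/
def Mr (a : Alg) : Matrix Intl Intl ℂ := msect (sm4 a.c a.m) (sm4 a.c' a.m')
/-- M_l = diag_α(𝗆'⊗I₂, 𝗆⊗I₂). -/
def Ml (a : Alg) : Matrix Intl Intl ℂ := msect (sm4 a.c' a.m') (sm4 a.c a.m)

/-- Lift a flavour matrix to (ṡ, (I, α)), acting trivially on ṡ and I. -/
def liftQ (X : Matrix Flav Flav ℂ) : Matrix HalfNoS HalfNoS ℂ :=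
  Matrix.of fun p q => if p.1 = q.1 ∧ p.2.1 = q.2.1 then X p.2.2 q.2.2 else 0

/-- Lift a matrix on (I, α) to (ṡ, (I, α)), acting trivially on ṡ. -/
def liftI (X : Matrix Intl Intl ℂ) : Matrix HalfNoS HalfNoS ℂ :=
  Matrix.of fun p q => if p.1 = q.1 then X p.2 q.2 else 0

/-- The Q-block of the representation: diag_s(Q_r, Q_l), trivial on ṡ and I. -/
def Qmat (a : Alg) : Matrix Half Half ℂ := dgB (liftQ (Qr a)) (liftQ (Ql a))
/-- The M-block of the representation: diag_s(M_r, M_l), trivial on ṡ. -/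
def Mmat (a : Alg) : Matrix Half Half ℂ := dgB (liftI (Mr a)) (liftI (Ml a))

/-- The representation π(a) = diag_C(Q, M) of the twisted algebra on ℂ¹²⁸. -/
def rep (a : Alg) : Matrix Full Full ℂ := dgB (Qmat a) (Mmat a)

/-- Twisted commutator [T, π(b)]_ρ = T·π(b) − π(ρ(b))·T. -/
def tcomm (T : Matrix Full Full ℂ) (b : Alg) : Matrix Full Full ℂ :=
  T * rep b - rep b.rho * T

/-- K = (i γ⁰_E γ²_E) ⊗ ξ ⊗ I₁₆ (with ξ on the internal index C);
the real structure is J = K ∘ cc. -/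
def Kmat : Matrix Full Full ℂ :=
  Matrix.of fun p q =>
    (!![0, 1; 1, 0] : Matrix (Fin 2) (Fin 2) ℂ) p.1 q.1 *
      Kspin (p.2.1, p.2.2.1) (q.2.1, q.2.2.1) *
      (if p.2.2.2 = q.2.2.2 then 1 else 0)

/-- J T J⁻¹ = −K · conj(T) · conj(K) as a matrix operation. -/
def Jconj (T : Matrix Full Full ℂ) : Matrix Full Full ℂ := -(Kmat * mconj T * mconj Kmat)

/-! ### Yukawa and Majorana parts of the Dirac operator -/

/-- 𝗄^I = diag(k_u^I, k_d^I). -/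
def kdiag (kν ke ku kd : ℂ) (i : Fin 4) : Matrix (Fin 2) (Fin 2) ℂ :=
  if i = 0 then Matrix.diagonal ![kν, ke] else Matrix.diagonal ![ku, kd]

/-- Block-diagonal matrix on (I, α) from a family of flavour matrices. -/
def diagI (F : Fin 4 → Matrix Flav Flav ℂ) : Matrix Intl Intl ℂ :=
  Matrix.of fun p q => if p.1 = q.1 then F p.1 p.2 q.2 else 0

/-- The Yukawa mass matrix D₀ = diag_I(D₀^I), D₀^I = [[0, conj 𝗄^I],[𝗄^I, 0]]. -/
def D0 (kν ke ku kd : ℂ) : Matrix Intl Intl ℂ :=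
  diagI fun i => odB (mconj (kdiag kν ke ku kd i)) (kdiag kν ke ku kd i)

/-- η ⊗ X, with η = diag_s(1,−1) ⊗ I₂ on (s, ṡ) and X on (I, α). -/
def etaD (X : Matrix Intl Intl ℂ) : Matrix Half Half ℂ := dgB (liftI X) (liftI (-X))

/-- γ⁵ ⊗ D_Y = diag_C(η⊗D₀, η⊗D₀†). -/
def g5DY (kν ke ku kd : ℂ) : Matrix Full Full ℂ :=
  dgB (etaD (D0 kν ke ku kd)) (etaD ((D0 kν ke ku kd)ᴴ))

/-- Ξ = diag(1,0,0,0)_I ⊗ diag(1,0,0,0)_α on (I, α). -/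
def XiI : Matrix Intl Intl ℂ :=
  Matrix.of fun p q =>
    if p = q ∧ p.1 = 0 ∧ p.2 = ((0 : Fin 2), (0 : Fin 2)) then 1 else 0

/-- γ⁵ ⊗ D_M = [[0, η⊗D_R],[η⊗D_R†, 0]]_C with D_R = k_R Ξ. -/
def g5DM (kR : ℂ) : Matrix Full Full ℂ :=
  odB (etaD (kR • XiI)) (etaD ((kR • XiI)ᴴ))

/-! ### The free 1-form -/

/-- Lift a spinor matrix (on (s, ṡ)) to ℂ¹²⁸, identity on C and (I, α). -/
def liftSpin (G : Matrix (Fin 2 × Fin 2) (Fin 2 × Fin 2) ℂ) : Matrix Full Full ℂ :=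
  Matrix.of fun p q =>
    (if p.1 = q.1 ∧ p.2.2.2 = q.2.2.2 then 1 else 0) * G (p.2.1, p.2.2.1) (q.2.1, q.2.2.1)

/-- Q_μ = diag_s(Q^r_μ, Q^l_μ), Q^{r/l}_μ = diag(c^{r/l}, conj c^{r/l}, q^{r/l}),
trivial on ṡ and I. -/
def freeQ (cr cl : ℂ) (qr ql : Matrix (Fin 2) (Fin 2) ℂ) : Matrix Half Half ℂ :=
  dgB (liftQ (dgB (cdiag cr) qr)) (liftQ (dgB (cdiag cl) ql))

/-- M_μ = diag_s(M^r_μ, M^l_μ), M^r_μ = diag_α(𝗆^r⊗I₂, 𝗆^l⊗I₂), 𝗆^{r/l} = diag(c^{r/l}, m^{r/l}),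
trivial on ṡ. -/
def freeM (cr cl : ℂ) (mr ml : Matrix (Fin 3) (Fin 3) ℂ) : Matrix Half Half ℂ :=
  dgB (liftI (msect (sm4 cr mr) (sm4 cl ml))) (liftI (msect (sm4 cl ml) (sm4 cr mr)))

/-- The free 1-form coefficient matrix A_μ = diag_C(Q_μ, M_μ). -/
def freeA (cr cl : ℂ) (qr ql : Matrix (Fin 2) (Fin 2) ℂ)
    (mr ml : Matrix (Fin 3) (Fin 3) ℂ) : Matrix Full Full ℂ :=
  dgB (freeQ cr cl qr ql) (freeM cr cl mr ml)

/-! ### Partial derivatives -/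

/-- Partial derivative in the μ-th coordinate direction of ℝ⁴ (ℂ-valued). -/
def pdC (μ : Fin 4) (f : (Fin 4 → ℝ) → ℂ) (x : Fin 4 → ℝ) : ℂ :=
  fderiv ℝ f x (Pi.single μ 1)

/-- Partial derivative in the μ-th coordinate direction of ℝ⁴ (ℝ-valued). -/
def pdR (μ : Fin 4) (f : (Fin 4 → ℝ) → ℝ) (x : Fin 4 → ℝ) : ℝ :=
  fderiv ℝ f x (Pi.single μ 1)

/-- Entrywise partial derivative of a matrix-valued function. -/
def pdM {m n : Type} (μ : Fin 4) (F : (Fin 4 → ℝ) → Matrix m n ℂ) (x : Fin 4 → ℝ) :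
    Matrix m n ℂ :=
  Matrix.of fun i j => pdC μ (fun y => F y i j) x


/-! In the basis (C, s, ṡ, I, α), π(a) and γ⁵⊗D_Y, hence [γ⁵⊗D_Y, π(b)]_ρ, are block diagonal
in (C, s) and trivial on ṡ. The real structure swaps the two C-blocks and, because
σ₂·conj(σ₂) = −1 absorbs the sign of J T J⁻¹ = −K conj(T) conj(K), it turns π(a)† into the
transposes of its blocks; so in the C = 0 sector a° acts by M_r(a)ᵀ, M_l(a)ᵀ.

D₀ is diagonal in lepto-colour, with one block for the lepton and one shared by the three
colours, each block exchanging the two flavour pairs. A matrix of that shape intertwines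
diag_α(N⊗I₂, N'⊗I₂) with diag_α(N'⊗I₂, N⊗I₂) whenever N, N' do not mix the lepton with the
colours. Applied to D₀† and M_{r,l}(b) this kills the C = 1 blocks of [γ⁵⊗D_Y, π(b)]_ρ; its
C = 0 blocks again have the shape of D₀, and applied to them and M_{r,l}(a)ᵀ it gives the
twisted commutation with a°. -/

open Kronecker

section BlockCalculus

variable {m : Type}

lemma dgB_mul_dgB [Fintype m] (A B C D : Matrix m m ℂ) :
    dgB A B * dgB C D = dgB (A * C) (B * D) := by
  ext ⟨i, x⟩ ⟨j, y⟩
  fin_cases i <;> fin_cases j <;>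
    simp [dgB, Matrix.mul_apply, Fintype.sum_prod_type]

lemma odB_mul_dgB [Fintype m] (A B C D : Matrix m m ℂ) :
    odB A B * dgB C D = odB (A * D) (B * C) := by
  ext ⟨i, x⟩ ⟨j, y⟩
  fin_cases i <;> fin_cases j <;>
    simp [odB, dgB, Matrix.mul_apply, Fintype.sum_prod_type]

lemma dgB_mul_odB [Fintype m] (A B C D : Matrix m m ℂ) :
    dgB A B * odB C D = odB (A * C) (B * D) := by
  ext ⟨i, x⟩ ⟨j, y⟩
  fin_cases i <;> fin_cases j <;>
    simp [odB, dgB, Matrix.mul_apply, Fintype.sum_prod_type]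

lemma odB_mul_odB [Fintype m] (A B C D : Matrix m m ℂ) :
    odB A B * odB C D = dgB (A * D) (B * C) := by
  ext ⟨i, x⟩ ⟨j, y⟩
  fin_cases i <;> fin_cases j <;>
    simp [odB, dgB, Matrix.mul_apply, Fintype.sum_prod_type]

lemma dgB_sub_dgB (A B C D : Matrix m m ℂ) : dgB A B - dgB C D = dgB (A - C) (B - D) := by
  ext ⟨i, x⟩ ⟨j, y⟩
  fin_cases i <;> fin_cases j <;> simp [dgB]

lemma odB_sub_odB (A B C D : Matrix m m ℂ) : odB A B - odB C D = odB (A - C) (B - D) := by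
  ext ⟨i, x⟩ ⟨j, y⟩
  fin_cases i <;> fin_cases j <;> simp [odB]

lemma neg_dgB (A B : Matrix m m ℂ) : -dgB A B = dgB (-A) (-B) := by
  ext ⟨i, x⟩ ⟨j, y⟩
  fin_cases i <;> fin_cases j <;> simp [dgB]

lemma dgB_zero : dgB (0 : Matrix m m ℂ) 0 = 0 := by
  ext ⟨i, x⟩ ⟨j, y⟩
  fin_cases i <;> fin_cases j <;> simp [dgB]

lemma conjTranspose_dgB (A B : Matrix m m ℂ) : (dgB A B)ᴴ = dgB Aᴴ Bᴴ := by
  ext ⟨i, x⟩ ⟨j, y⟩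
  fin_cases i <;> fin_cases j <;> simp [dgB]

lemma conjTranspose_odB (A B : Matrix m m ℂ) : (odB A B)ᴴ = odB Bᴴ Aᴴ := by
  ext ⟨i, x⟩ ⟨j, y⟩
  fin_cases i <;> fin_cases j <;> simp [odB]

lemma mconj_dgB (A B : Matrix m m ℂ) : mconj (dgB A B) = dgB (mconj A) (mconj B) := by
  ext ⟨i, x⟩ ⟨j, y⟩
  fin_cases i <;> fin_cases j <;> simp [dgB, mconj]

lemma mconj_odB (A B : Matrix m m ℂ) : mconj (odB A B) = odB (mconj A) (mconj B) := by
  ext ⟨i, x⟩ ⟨j, y⟩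
  fin_cases i <;> fin_cases j <;> simp [odB, mconj]

lemma odB_apply_of_fst_eq (A B : Matrix m m ℂ) {p q : Fin 2 × m} (h : p.1 = q.1) :
    odB A B p q = 0 := by
  obtain ⟨i, x⟩ := p; obtain ⟨j, y⟩ := q
  obtain rfl : i = j := h
  fin_cases i <;> simp [odB]

end BlockCalculus

lemma liftI_eq_kronecker (X : Matrix Intl Intl ℂ) :
    liftI X = (1 : Matrix (Fin 2) (Fin 2) ℂ) ⊗ₖ X := by
  ext p q
  simp [liftI, Matrix.one_apply, ite_mul]

lemma liftI_mul (X Y : Matrix Intl Intl ℂ) : liftI X * liftI Y = liftI (X * Y) := by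
  simp only [liftI_eq_kronecker, ← Matrix.mul_kronecker_mul, one_mul]

lemma liftI_sub (X Y : Matrix Intl Intl ℂ) : liftI X - liftI Y = liftI (X - Y) := by
  ext p q
  by_cases h : p.1 = q.1 <;> simp [liftI, h]

lemma conjTranspose_liftI (X : Matrix Intl Intl ℂ) : (liftI X)ᴴ = liftI Xᴴ := by
  ext p q
  simp [liftI, apply_ite (star : ℂ → ℂ), eq_comm]

lemma mconj_liftI (X : Matrix Intl Intl ℂ) : mconj (liftI X) = liftI (mconj X) := by
  ext p q
  simp [liftI, mconj, apply_ite (starRingEnd ℂ)]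

lemma liftQ_eq (X : Matrix Flav Flav ℂ) : liftQ X = liftI (diagI fun _ => X) := by
  ext p q
  simp [liftQ, liftI, diagI, ite_and]

lemma mconj_conjTranspose {n : Type} (A : Matrix n n ℂ) : mconj Aᴴ = Aᵀ := by
  ext p q
  simp [mconj]

def csDiag (A B C D : Matrix Intl Intl ℂ) : Matrix Full Full ℂ :=
  dgB (dgB (liftI A) (liftI B)) (dgB (liftI C) (liftI D))

lemma csDiag_mul (A B C D A' B' C' D' : Matrix Intl Intl ℂ) :
    csDiag A B C D * csDiag A' B' C' D' = csDiag (A * A') (B * B') (C * C') (D * D') := by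
  simp only [csDiag, dgB_mul_dgB, liftI_mul]

lemma csDiag_sub (A B C D A' B' C' D' : Matrix Intl Intl ℂ) :
    csDiag A B C D - csDiag A' B' C' D' = csDiag (A - A') (B - B') (C - C') (D - D') := by
  simp only [csDiag, dgB_sub_dgB, liftI_sub]

lemma conjTranspose_csDiag (A B C D : Matrix Intl Intl ℂ) :
    (csDiag A B C D)ᴴ = csDiag Aᴴ Bᴴ Cᴴ Dᴴ := by
  simp only [csDiag, conjTranspose_dgB, conjTranspose_liftI]

lemma csDiag_zero : csDiag 0 0 0 0 = 0 := by
  simp only [csDiag, show liftI 0 = 0 by ext; simp [liftI], dgB_zero]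

lemma Kspin_eq : Kspin = dgB (-pauli2) pauli2 := by
  rw [Kspin, gammaE, gammaE, odB_mul_odB]
  ext ⟨i, x⟩ ⟨j, y⟩
  fin_cases i <;> fin_cases j <;> fin_cases x <;> fin_cases y <;>
    simp [dgB, sigE, sigTE, pauli2, Matrix.mul_apply, Fin.sum_univ_two]

def KspinLift : Matrix Half Half ℂ :=
  dgB ((-pauli2) ⊗ₖ (1 : Matrix Intl Intl ℂ)) (pauli2 ⊗ₖ (1 : Matrix Intl Intl ℂ))

lemma Kmat_eq : Kmat = odB KspinLift KspinLift := by
  ext ⟨c, s, t, ι⟩ ⟨c', s', t', κ⟩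
  fin_cases c <;> fin_cases c' <;> fin_cases s <;> fin_cases s' <;>
    simp [Kmat, Kspin_eq, KspinLift, odB, dgB, Matrix.one_apply]

lemma pauli2_mul_mconj : pauli2 * mconj pauli2 = -1 := by
  ext i j
  fin_cases i <;> fin_cases j <;> simp [pauli2, mconj, Matrix.mul_apply, Fin.sum_univ_two]

lemma kronecker_one_conj (S : Matrix (Fin 2) (Fin 2) ℂ) (A : Matrix Intl Intl ℂ) :
    (S ⊗ₖ (1 : Matrix Intl Intl ℂ)) * liftI A * mconj (S ⊗ₖ (1 : Matrix Intl Intl ℂ))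
      = (S * mconj S) ⊗ₖ A := by
  have hconj :
      mconj (S ⊗ₖ (1 : Matrix Intl Intl ℂ)) = mconj S ⊗ₖ (1 : Matrix Intl Intl ℂ) := by
    ext p q
    simp [mconj, Matrix.one_apply, apply_ite (starRingEnd ℂ)]
  rw [hconj, liftI_eq_kronecker, ← Matrix.mul_kronecker_mul, ← Matrix.mul_kronecker_mul,
    mul_one, one_mul, mul_one]

lemma neg_one_kronecker (A : Matrix Intl Intl ℂ) :
    (-1 : Matrix (Fin 2) (Fin 2) ℂ) ⊗ₖ A = -liftI A := by
  ext p q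
  simp [liftI, Matrix.one_apply, ite_mul]

lemma KspinLift_conj (A B : Matrix Intl Intl ℂ) :
    KspinLift * dgB (liftI A) (liftI B) * mconj KspinLift = -dgB (liftI A) (liftI B) := by
  have hneg : mconj (-pauli2) = -mconj pauli2 := by ext; simp [mconj]
  rw [KspinLift, dgB_mul_dgB, mconj_dgB, dgB_mul_dgB, kronecker_one_conj, kronecker_one_conj,
    hneg, neg_mul_neg, pauli2_mul_mconj, neg_one_kronecker, neg_one_kronecker, neg_dgB]

lemma Jconj_csDiag (A B C D : Matrix Intl Intl ℂ) :
    Jconj (csDiag A B C D) = csDiag (mconj C) (mconj D) (mconj A) (mconj B) := by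
  rw [Jconj, Kmat_eq, mconj_odB, csDiag, mconj_dgB, odB_mul_dgB, odB_mul_odB]
  simp only [mconj_dgB, mconj_liftI, KspinLift_conj, neg_dgB, neg_neg]
  rfl

lemma diagI_mul_apply (F : Fin 4 → Matrix Flav Flav ℂ) (M : Matrix Intl Intl ℂ)
    (i : Fin 4) (φ : Flav) (q : Intl) :
    (diagI F * M) (i, φ) q = ∑ χ, F i φ χ * M (i, χ) q := by
  simp [Matrix.mul_apply, Fintype.sum_prod_type, diagI, ite_mul]

lemma mul_diagI_apply (F : Fin 4 → Matrix Flav Flav ℂ) (M : Matrix Intl Intl ℂ)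
    (p : Intl) (j : Fin 4) (ψ : Flav) :
    (M * diagI F) p (j, ψ) = ∑ χ, M p (j, χ) * F j χ ψ := by
  simp [Matrix.mul_apply, Fintype.sum_prod_type, diagI, mul_ite]

lemma diagI_mul_diagI (F G : Fin 4 → Matrix Flav Flav ℂ) :
    diagI F * diagI G = diagI fun i => F i * G i := by
  ext ⟨i, φ⟩ ⟨j, ψ⟩
  rw [diagI_mul_apply]
  by_cases h : i = j <;> simp [diagI, h, Matrix.mul_apply]

lemma diagI_sub_diagI (F G : Fin 4 → Matrix Flav Flav ℂ) :
    diagI F - diagI G = diagI fun i => F i - G i := by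
  ext ⟨i, φ⟩ ⟨j, ψ⟩
  by_cases h : i = j <;> simp [diagI, h]

lemma conjTranspose_diagI (F : Fin 4 → Matrix Flav Flav ℂ) :
    (diagI F)ᴴ = diagI fun i => (F i)ᴴ := by
  ext ⟨i, φ⟩ ⟨j, ψ⟩
  by_cases h : i = j <;> simp [diagI, h, eq_comm]

lemma msect_transpose (A B : Matrix (Fin 4) (Fin 4) ℂ) : (msect A B)ᵀ = msect Aᵀ Bᵀ := by
  ext ⟨i, φ⟩ ⟨j, ψ⟩
  by_cases h : φ = ψ <;> simp [msect, h, eq_comm]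

def IsLeptoQuarkDiagonal (N : Matrix (Fin 4) (Fin 4) ℂ) : Prop :=
  ∀ i j : Fin 4, ¬(i = 0 ↔ j = 0) → N i j = 0

lemma IsLeptoQuarkDiagonal.transpose {N : Matrix (Fin 4) (Fin 4) ℂ}
    (hN : IsLeptoQuarkDiagonal N) :
    IsLeptoQuarkDiagonal Nᵀ :=
  fun i j h => hN j i (by rwa [Iff.comm])

lemma isLeptoQuarkDiagonal_sm4 (c : ℂ) (m : Matrix (Fin 3) (Fin 3) ℂ) :
    IsLeptoQuarkDiagonal (sm4 c m) := by
  intro i j h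
  by_cases hi : i = 0 <;> by_cases hj : j = 0 <;> simp_all [sm4]

/-- The shape of D₀ and of its twisted commutators with the Q-part of π: the same block on
the three colours, and each block exchanges the two flavour pairs. -/
structure IsYukawaFamily (F : Fin 4 → Matrix Flav Flav ℂ) : Prop where
  eq_of_iff : ∀ i j : Fin 4, (i = 0 ↔ j = 0) → F i = F j
  exists_odB : ∀ i, ∃ A B, F i = odB A B

lemma IsYukawaFamily.apply_of_fst_eq {F : Fin 4 → Matrix Flav Flav ℂ} (hF : IsYukawaFamily F)
    (i : Fin 4) {φ ψ : Flav} (h : φ.1 = ψ.1) : F i φ ψ = 0 := by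
  obtain ⟨A, B, hAB⟩ := hF.exists_odB i
  rw [hAB, odB_apply_of_fst_eq A B h]

lemma IsYukawaFamily.diagI_mul_msect {F : Fin 4 → Matrix Flav Flav ℂ} (hF : IsYukawaFamily F)
    {N N' : Matrix (Fin 4) (Fin 4) ℂ} (hN : IsLeptoQuarkDiagonal N)
    (hN' : IsLeptoQuarkDiagonal N') :
    diagI F * msect N N' = msect N' N * diagI F := by
  ext ⟨i, φ⟩ ⟨j, ψ⟩
  have hL : (diagI F * msect N N') (i, φ) (j, ψ)
      = F i φ ψ * (if ψ.1 = 0 then N i j else N' i j) := by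
    rw [diagI_mul_apply]
    simp [msect]
  have hR : (msect N' N * diagI F) (i, φ) (j, ψ)
      = (if φ.1 = 0 then N' i j else N i j) * F j φ ψ := by
    rw [mul_diagI_apply]
    simp [msect]
  rw [hL, hR]
  by_cases hf : φ.1 = ψ.1
  · rw [hF.apply_of_fst_eq i hf, hF.apply_of_fst_eq j hf, zero_mul, mul_zero]
  by_cases hij : i = 0 ↔ j = 0
  · rw [hF.eq_of_iff i j hij, mul_comm]
    obtain ⟨f, x⟩ := φ
    obtain ⟨g, y⟩ := ψ
    fin_cases f <;> fin_cases g <;> simp_all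
  · simp [hN i j hij, hN' i j hij]

lemma IsYukawaFamily.conjTranspose {F : Fin 4 → Matrix Flav Flav ℂ} (hF : IsYukawaFamily F) :
    IsYukawaFamily fun i => (F i)ᴴ where
  eq_of_iff i j h := by rw [hF.eq_of_iff i j h]
  exists_odB i := by
    obtain ⟨A, B, hAB⟩ := hF.exists_odB i
    exact ⟨Bᴴ, Aᴴ, by rw [hAB, conjTranspose_odB]⟩

lemma IsYukawaFamily.mul_dgB_sub_dgB_mul {F : Fin 4 → Matrix Flav Flav ℂ}
    (hF : IsYukawaFamily F) (P Q R S : Matrix (Fin 2) (Fin 2) ℂ) :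
    IsYukawaFamily fun i => F i * dgB P Q - dgB R S * F i where
  eq_of_iff i j h := by rw [hF.eq_of_iff i j h]
  exists_odB i := by
    obtain ⟨A, B, hAB⟩ := hF.exists_odB i
    exact ⟨_, _, by rw [hAB, odB_mul_dgB, dgB_mul_odB, odB_sub_odB]⟩

def D0block (kν ke ku kd : ℂ) (i : Fin 4) : Matrix Flav Flav ℂ :=
  odB (mconj (kdiag kν ke ku kd i)) (kdiag kν ke ku kd i)

lemma D0_eq (kν ke ku kd : ℂ) : D0 kν ke ku kd = diagI (D0block kν ke ku kd) := rfl

lemma isYukawaFamily_D0block (kν ke ku kd : ℂ) : IsYukawaFamily (D0block kν ke ku kd) where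
  eq_of_iff i j h := by
    by_cases hi : i = 0
    · simp [D0block, kdiag, hi, h.mp hi]
    · simp [D0block, kdiag, hi, mt h.mpr hi]
  exists_odB _ := ⟨_, _, rfl⟩

@[simp] lemma Qr_rho (a : Alg) : Qr a.rho = Ql a := rfl
@[simp] lemma Ql_rho (a : Alg) : Ql a.rho = Qr a := rfl
@[simp] lemma Mr_rho (a : Alg) : Mr a.rho = Ml a := rfl
@[simp] lemma Ml_rho (a : Alg) : Ml a.rho = Mr a := rfl

lemma rep_eq (a : Alg) :
    rep a = csDiag (diagI fun _ => Qr a) (diagI fun _ => Ql a) (Mr a) (Ml a) := by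
  rw [rep, Qmat, Mmat, liftQ_eq, liftQ_eq, csDiag]

lemma Jconj_rep (a : Alg) :
    Jconj (rep a)ᴴ
      = csDiag (Mr a)ᵀ (Ml a)ᵀ (diagI fun _ => Qr a)ᵀ (diagI fun _ => Ql a)ᵀ := by
  rw [rep_eq, conjTranspose_csDiag, Jconj_csDiag]
  simp only [mconj_conjTranspose]

lemma g5DY_eq (kν ke ku kd : ℂ) :
    g5DY kν ke ku kd = csDiag (D0 kν ke ku kd) (-D0 kν ke ku kd)
      (D0 kν ke ku kd)ᴴ (-(D0 kν ke ku kd)ᴴ) := rfl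

section Commutation

variable {F : Fin 4 → Matrix Flav Flav ℂ}

lemma IsYukawaFamily.diagI_mul_Mr (hF : IsYukawaFamily F) (a : Alg) :
    diagI F * Mr a = Ml a * diagI F :=
  hF.diagI_mul_msect (isLeptoQuarkDiagonal_sm4 _ _) (isLeptoQuarkDiagonal_sm4 _ _)

lemma IsYukawaFamily.diagI_mul_Ml (hF : IsYukawaFamily F) (a : Alg) :
    diagI F * Ml a = Mr a * diagI F :=
  hF.diagI_mul_msect (isLeptoQuarkDiagonal_sm4 _ _) (isLeptoQuarkDiagonal_sm4 _ _)

lemma IsYukawaFamily.diagI_mul_Mr_transpose (hF : IsYukawaFamily F) (a : Alg) :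
    diagI F * (Mr a)ᵀ = (Ml a)ᵀ * diagI F := by
  rw [Mr, Ml, msect_transpose, msect_transpose]
  exact hF.diagI_mul_msect (isLeptoQuarkDiagonal_sm4 _ _).transpose
    (isLeptoQuarkDiagonal_sm4 _ _).transpose

lemma IsYukawaFamily.diagI_mul_Ml_transpose (hF : IsYukawaFamily F) (a : Alg) :
    diagI F * (Ml a)ᵀ = (Mr a)ᵀ * diagI F := by
  rw [Mr, Ml, msect_transpose, msect_transpose]
  exact hF.diagI_mul_msect (isLeptoQuarkDiagonal_sm4 _ _).transpose
    (isLeptoQuarkDiagonal_sm4 _ _).transpose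

end Commutation

def yukawaQComm (kν ke ku kd : ℂ) (b : Alg) (i : Fin 4) : Matrix Flav Flav ℂ :=
  D0block kν ke ku kd i * Qr b - Ql b * D0block kν ke ku kd i

lemma isYukawaFamily_yukawaQComm (kν ke ku kd : ℂ) (b : Alg) :
    IsYukawaFamily (yukawaQComm kν ke ku kd b) :=
  (isYukawaFamily_D0block kν ke ku kd).mul_dgB_sub_dgB_mul _ _ _ _

lemma tcomm_g5DY (kν ke ku kd : ℂ) (b : Alg) :
    tcomm (g5DY kν ke ku kd) b
      = csDiag (diagI (yukawaQComm kν ke ku kd b)) (-diagI (yukawaQComm kν ke ku kd b.rho))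
          0 0 := by
  have hD := (isYukawaFamily_D0block kν ke ku kd).conjTranspose
  unfold yukawaQComm
  rw [tcomm, g5DY_eq, rep_eq, rep_eq, csDiag_mul, csDiag_mul, csDiag_sub]
  simp only [Qr_rho, Ql_rho, Mr_rho, Ml_rho, D0_eq, conjTranspose_diagI, neg_mul,
    mul_neg, diagI_mul_diagI, hD.diagI_mul_Mr, hD.diagI_mul_Ml, ← diagI_sub_diagI]
  congr 1 <;> abel

/-- the twisted first-order condition for the Yukawa part of the Dirac
operator: [[γ⁵⊗D_Y, π(b)]_ρ, a°]_{ρ°} = 0, with a° = J·π(a)†·J⁻¹ and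
ρ°(a°) = J·π(ρ(a))†·J⁻¹. -/
theorem statement19 (kν ke ku kd : ℂ) (a b : Alg) :
    tcomm (g5DY kν ke ku kd) b * Jconj ((rep a)ᴴ)
      - Jconj ((rep a.rho)ᴴ) * tcomm (g5DY kν ke ku kd) b = 0 := by
  have hb := isYukawaFamily_yukawaQComm kν ke ku kd b
  have hbρ := isYukawaFamily_yukawaQComm kν ke ku kd b.rho
  rw [tcomm_g5DY, Jconj_rep, Jconj_rep, csDiag_mul, csDiag_mul, csDiag_sub]
  simp only [Mr_rho, Ml_rho, neg_mul, mul_neg, hb.diagI_mul_Mr_transpose,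
    hbρ.diagI_mul_Ml_transpose, zero_mul, mul_zero, sub_self, csDiag_zero]

end TwistSM
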